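/- Let Γ be a convex lattice polygon whose adjoint Γ' is nonempty, and suppose every optimal direction of Γ' is tight for Γ', i.e. S(Γ') = T(Γ') where T(Γ') = {h ∈ S(Γ') : h tight for Γ'} (this requires Γ'' nonempty). Then S(Γ) = S(Γ') and v(Γ) = v(Γ') + 2. -/

import Mathlib

/-!
Every width of `Γ` exceeds that of `Γ'` by at least `2`: the extreme values of a lattice
polygon are integers and `Γ'` lies in the interior of `Γ`. The substance is that tightness
passes from `Γ'` to `Γ`. Suppose `h` is max-tight for `Γ'`, with top level `m`, while a vertex
`q` of `Γ` reaches level `m + 2`. Then `h` is primitive, and the line at level `m + 1` meets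
the interior of `Γ` in a lattice-free open segment. Projecting from `q` onto that segment traps
every interior lattice point of `Γ` in a lattice wedge with apex at level `m`, whose only lattice
points at level `m - 1` lie on its boundary lines. Hence no interior lattice point of `Γ'` lies
at level `m - 1`, contradicting tightness. Applied to an optimal direction of `Γ'` (which exists
since widths of lattice polygons are integers) this gives `v(Γ) = v(Γ') + 2` and `S(Γ) = S(Γ')`.
-/

noncomputable section

/-- `p` is a lattice point of `ℤ² ⊂ ℝ²`. -/
def IsLat (p : ℝ × ℝ) : Prop := (∃ m : ℤ, p.1 = m) ∧ (∃ n : ℤ, p.2 = n)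

/-- evaluation of the integral linear functional `h` at a point `p`. -/
def ev (h : ℤ × ℤ) (p : ℝ × ℝ) : ℝ := (h.1 : ℝ) * p.1 + (h.2 : ℝ) * p.2

/-- the maximum of `h` on `Γ`. -/
def maxW (Γ : Set (ℝ × ℝ)) (h : ℤ × ℤ) : ℝ := sSup (ev h '' Γ)

/-- the minimum of `h` on `Γ`. -/
def minW (Γ : Set (ℝ × ℝ)) (h : ℤ × ℤ) : ℝ := sInf (ev h '' Γ)

/-- the width of `Γ` in direction `h`. -/
def width (Γ : Set (ℝ × ℝ)) (h : ℤ × ℤ) : ℝ := maxW Γ h - minW Γ h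

/-- the adjoint polygon: convex hull of the interior lattice points of `Γ`. -/
def adjoint (Γ : Set (ℝ × ℝ)) : Set (ℝ × ℝ) :=
  convexHull ℝ {p | p ∈ interior Γ ∧ IsLat p}

/-- `h` is tight for `Γ` (max-tight and min-tight with respect to the adjoint). -/
def Tight (Γ : Set (ℝ × ℝ)) (h : ℤ × ℤ) : Prop :=
  maxW Γ h = maxW (adjoint Γ) h + 1 ∧ minW Γ h = minW (adjoint Γ) h - 1

/-- the lattice width of `Γ`: minimal width over nonzero integral directions. -/
def latticeWidth (Γ : Set (ℝ × ℝ)) : ℝ := sInf (width Γ '' {h : ℤ × ℤ | h ≠ 0})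

/-- a primitive integral direction. -/
def IsPrimitive (h : ℤ × ℤ) : Prop := Int.gcd h.1 h.2 = 1

/-- the set of optimal (minimal width) nonzero directions of `Γ`. -/
def optimalSet (Γ : Set (ℝ × ℝ)) : Set (ℤ × ℤ) :=
  {h | h ≠ 0 ∧ width Γ h = latticeWidth Γ}

open Set Pointwise

@[simp]
lemma ev_add_right (h : ℤ × ℤ) (p q : ℝ × ℝ) : ev h (p + q) = ev h p + ev h q := by
  simp only [ev, Prod.fst_add, Prod.snd_add]; ring

@[simp]
lemma ev_smul_right (h : ℤ × ℤ) (c : ℝ) (p : ℝ × ℝ) : ev h (c • p) = c * ev h p := by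
  simp only [ev, Prod.smul_fst, Prod.smul_snd, smul_eq_mul]; ring

@[simp]
lemma ev_add_left (g h : ℤ × ℤ) (p : ℝ × ℝ) : ev (g + h) p = ev g p + ev h p := by
  simp only [ev, Prod.fst_add, Prod.snd_add, Int.cast_add]; ring

@[simp]
lemma ev_neg_left (h : ℤ × ℤ) (p : ℝ × ℝ) : ev (-h) p = -ev h p := by
  simp only [ev, Prod.fst_neg, Prod.snd_neg, Int.cast_neg]; ring

@[simp]
lemma ev_smul_left (k : ℤ) (h : ℤ × ℤ) (p : ℝ × ℝ) : ev (k • h) p = k * ev h p := by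
  simp only [ev, Prod.smul_fst, Prod.smul_snd, smul_eq_mul, Int.cast_mul]; ring

lemma isLinearMap_ev (h : ℤ × ℤ) : IsLinearMap ℝ (ev h) :=
  ⟨ev_add_right h, ev_smul_right h⟩

lemma IsLat.exists_ev_eq {p : ℝ × ℝ} (hp : IsLat p) (h : ℤ × ℤ) : ∃ k : ℤ, ev h p = k := by
  obtain ⟨⟨a, ha⟩, ⟨b, hb⟩⟩ := hp
  exact ⟨h.1 * a + h.2 * b, by simp [ev, ha, hb]⟩

lemma minW_eq_neg_maxW_neg (X : Set (ℝ × ℝ)) (h : ℤ × ℤ) : minW X h = -maxW X (-h) := by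
  have : ev (-h) '' X = -(ev h '' X) := by
    ext x
    simp only [mem_neg, mem_image, ev_neg_left, neg_eq_iff_eq_neg]
  rw [minW, maxW, this, Real.sInf_def]

lemma maxW_smul (X : Set (ℝ × ℝ)) {d : ℤ} (hd : 0 ≤ d) (h : ℤ × ℤ) :
    maxW X (d • h) = d * maxW X h := by
  have : ev (d • h) '' X = (d : ℝ) • (ev h '' X) := by
    rw [← image_smul, image_image]
    simp only [ev_smul_left, smul_eq_mul]
  rw [maxW, maxW, this, Real.sSup_smul_of_nonneg (by exact_mod_cast hd : (0 : ℝ) ≤ d), smul_eq_mul]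

lemma exists_ev_lt_of_mem_interior {X : Set (ℝ × ℝ)} {h : ℤ × ℤ} (hh : h ≠ 0)
    {x : ℝ × ℝ} (hx : x ∈ interior X) : ∃ y ∈ X, ev h x < ev h y := by
  set v : ℝ × ℝ := ((h.1 : ℝ), (h.2 : ℝ))
  have hv : 0 < ev h v := by
    have : (h.1 : ℝ) ≠ 0 ∨ (h.2 : ℝ) ≠ 0 := by
      by_contra! hc; exact hh (Prod.ext (by exact_mod_cast hc.1) (by exact_mod_cast hc.2))
    simp only [ev, v]
    rcases this with h1 | h2
    · nlinarith [mul_self_pos.mpr h1, mul_self_nonneg (h.2 : ℝ)]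
    · nlinarith [mul_self_pos.mpr h2, mul_self_nonneg (h.1 : ℝ)]
  have hcont : Continuous fun t : ℝ => x + t • v := by fun_prop
  have hnhds : ∀ᶠ t in nhds (0 : ℝ), x + t • v ∈ X := by
    apply hcont.continuousAt.preimage_mem_nhds
    simpa using mem_interior_iff_mem_nhds.mp hx
  obtain ⟨t, htX, ht⟩ := (hnhds.filter_mono nhdsWithin_le_nhds |>.and
    (self_mem_nhdsWithin (s := Ioi (0 : ℝ)))).exists
  exact ⟨_, htX, by simp only [ev_add_right, ev_smul_right]; nlinarith [show 0 < t from ht]⟩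

lemma not_mem_interior_convexHull_of_forall_ev_le {P : Set (ℝ × ℝ)} {h : ℤ × ℤ} (hh : h ≠ 0)
    {x : ℝ × ℝ} (hP : ∀ p ∈ P, ev h p ≤ ev h x) : x ∉ interior (convexHull ℝ P) := by
  intro hx
  obtain ⟨y, hy, hlt⟩ := exists_ev_lt_of_mem_interior hh hx
  have : convexHull ℝ P ⊆ {z | ev h z ≤ ev h x} :=
    convexHull_min hP (convex_halfSpace_le (isLinearMap_ev h) _)
  exact (this hy).not_gt hlt

lemma exists_isGreatest_convexHull {S : Set (ℝ × ℝ)} (hS : S.Finite) (hne : S.Nonempty)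
    (h : ℤ × ℤ) : ∃ q ∈ S, IsGreatest (ev h '' convexHull ℝ S) (ev h q) := by
  obtain ⟨q, hq, hmax⟩ := S.exists_max_image (ev h) hS hne
  refine ⟨q, hq, mem_image_of_mem _ (subset_convexHull ℝ S hq), ?_⟩
  rintro _ ⟨y, hy, rfl⟩
  exact convexHull_min hmax (convex_halfSpace_le (isLinearMap_ev h) _) hy

lemma exists_isLeast_image_of_nat {α : Type*} {s : Set α} (hs : s.Nonempty) {f : α → ℝ}
    (hf : ∀ a ∈ s, ∃ n : ℕ, f a = n) : ∃ a ∈ s, IsLeast (f '' s) (f a) := by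
  set T : Set ℕ := {n | ∃ a ∈ s, f a = n}
  have hT : T.Nonempty := by
    obtain ⟨a, ha⟩ := hs
    obtain ⟨n, hn⟩ := hf a ha
    exact ⟨n, a, ha, hn⟩
  obtain ⟨a, ha, hfa⟩ := Nat.sInf_mem hT
  refine ⟨a, ha, mem_image_of_mem f ha, ?_⟩
  rintro _ ⟨b, hb, rfl⟩
  obtain ⟨n, hn⟩ := hf b hb
  rw [hfa, hn]
  exact_mod_cast Nat.sInf_le (show n ∈ T from ⟨b, hb, hn⟩)

def interiorLatticePoints (Γ : Set (ℝ × ℝ)) : Set (ℝ × ℝ) := {p | p ∈ interior Γ ∧ IsLat p}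

lemma Convex.adjoint_subset_interior {Γ : Set (ℝ × ℝ)} (hΓ : Convex ℝ Γ) :
    adjoint Γ ⊆ interior Γ :=
  convexHull_min (fun _ hp => hp.1) hΓ.interior

lemma IsCompact.finite_setOf_isLat {K : Set (ℝ × ℝ)} (hK : IsCompact K) :
    {p | p ∈ K ∧ IsLat p}.Finite := by
  set e : ℤ × ℤ → ℝ × ℝ := Prod.map Int.cast Int.cast
  have he : Topology.IsClosedEmbedding e :=
    Int.isClosedEmbedding_coe_real.prodMap Int.isClosedEmbedding_coe_real
  refine ((he.isCompact_preimage hK).finite_of_discrete.image e).subset ?_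
  rintro p ⟨hpK, ⟨a, ha⟩, ⟨b, hb⟩⟩
  have hp : e (a, b) = p := Prod.ext ha.symm hb.symm
  exact hp ▸ mem_image_of_mem e (by rwa [mem_preimage, hp])

def IsLatticePolygon (Γ : Set (ℝ × ℝ)) : Prop :=
  ∃ S : Set (ℝ × ℝ), S.Finite ∧ S.Nonempty ∧ (∀ p ∈ S, IsLat p) ∧ convexHull ℝ S = Γ

namespace IsLatticePolygon

variable {Γ : Set (ℝ × ℝ)}

lemma convex (hΓ : IsLatticePolygon Γ) : Convex ℝ Γ := by
  obtain ⟨S, -, -, -, rfl⟩ := hΓ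
  exact convex_convexHull ℝ S

lemma isCompact (hΓ : IsLatticePolygon Γ) : IsCompact Γ := by
  obtain ⟨S, hS, -, -, rfl⟩ := hΓ
  exact hS.isCompact_convexHull ℝ

lemma exists_isGreatest (hΓ : IsLatticePolygon Γ) (h : ℤ × ℤ) :
    ∃ q ∈ Γ, IsLat q ∧ IsGreatest (ev h '' Γ) (ev h q) := by
  obtain ⟨S, hS, hne, hlat, rfl⟩ := hΓ
  obtain ⟨q, hq, hmax⟩ := exists_isGreatest_convexHull hS hne h
  exact ⟨q, subset_convexHull ℝ S hq, hlat q hq, hmax⟩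

lemma finite_interiorLatticePoints (hΓ : IsLatticePolygon Γ) :
    (interiorLatticePoints Γ).Finite :=
  hΓ.isCompact.finite_setOf_isLat.subset fun _ hp => ⟨interior_subset hp.1, hp.2⟩

lemma isLatticePolygon_adjoint (hΓ : IsLatticePolygon Γ)
    (hP : (interiorLatticePoints Γ).Nonempty) : IsLatticePolygon (adjoint Γ) :=
  ⟨_, hΓ.finite_interiorLatticePoints, hP, fun _ hp => hp.2, rfl⟩

lemma exists_isGreatest_adjoint (hΓ : IsLatticePolygon Γ)
    (hP : (interiorLatticePoints Γ).Nonempty) (h : ℤ × ℤ) :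
    ∃ p ∈ interiorLatticePoints Γ, IsGreatest (ev h '' adjoint Γ) (ev h p) :=
  exists_isGreatest_convexHull hΓ.finite_interiorLatticePoints hP h

lemma maxW_adjoint_add_one_le (hΓ : IsLatticePolygon Γ)
    (hP : (interiorLatticePoints Γ).Nonempty) {h : ℤ × ℤ} (hh : h ≠ 0) :
    maxW (adjoint Γ) h + 1 ≤ maxW Γ h := by
  obtain ⟨p, hp, hpmax⟩ := hΓ.exists_isGreatest_adjoint hP h
  obtain ⟨q, -, hq, hqmax⟩ := hΓ.exists_isGreatest h
  obtain ⟨y, hy, hlt⟩ := exists_ev_lt_of_mem_interior hh hp.1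
  obtain ⟨a, ha⟩ := hp.2.exists_ev_eq h
  obtain ⟨b, hb⟩ := hq.exists_ev_eq h
  have hab : (a : ℝ) < b := ha ▸ hb ▸ hlt.trans_le (hqmax.2 (mem_image_of_mem _ hy))
  rw [maxW, maxW, hpmax.csSup_eq, hqmax.csSup_eq, ha, hb]
  exact_mod_cast (show a + 1 ≤ b by exact_mod_cast hab)

lemma minW_le_minW_adjoint_sub_one (hΓ : IsLatticePolygon Γ)
    (hP : (interiorLatticePoints Γ).Nonempty) {h : ℤ × ℤ} (hh : h ≠ 0) :
    minW Γ h ≤ minW (adjoint Γ) h - 1 := by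
  have := hΓ.maxW_adjoint_add_one_le hP (neg_ne_zero.mpr hh)
  rw [minW_eq_neg_maxW_neg, minW_eq_neg_maxW_neg]
  linarith

lemma width_adjoint_add_two_le (hΓ : IsLatticePolygon Γ)
    (hP : (interiorLatticePoints Γ).Nonempty) {h : ℤ × ℤ} (hh : h ≠ 0) :
    width (adjoint Γ) h + 2 ≤ width Γ h := by
  have := hΓ.maxW_adjoint_add_one_le hP hh
  have := hΓ.minW_le_minW_adjoint_sub_one hP hh
  rw [width, width]
  linarith

lemma exists_width_eq_nat (hΓ : IsLatticePolygon Γ) (h : ℤ × ℤ) :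
    ∃ n : ℕ, width Γ h = n := by
  obtain ⟨q, -, hq, hqmax⟩ := hΓ.exists_isGreatest h
  obtain ⟨q', hq'Γ, hq', hq'max⟩ := hΓ.exists_isGreatest (-h)
  obtain ⟨a, ha⟩ := hq.exists_ev_eq h
  obtain ⟨b, hb⟩ := hq'.exists_ev_eq h
  have hba : (b : ℝ) ≤ a := ha ▸ hb ▸ hqmax.2 (mem_image_of_mem _ hq'Γ)
  refine ⟨(a - b).toNat, ?_⟩
  rw [width, minW_eq_neg_maxW_neg, maxW, maxW, hqmax.csSup_eq, hq'max.csSup_eq, ev_neg_left,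
    ha, hb, ← Int.cast_natCast, Int.toNat_of_nonneg (by exact_mod_cast sub_nonneg.mpr hba)]
  push_cast
  ring

lemma exists_isLeast_width (hΓ : IsLatticePolygon Γ) :
    ∃ h ≠ 0, IsLeast (width Γ '' {h | h ≠ 0}) (width Γ h) :=
  exists_isLeast_image_of_nat ⟨(1, 0), show ((1, 0) : ℤ × ℤ) ≠ 0 by simp⟩ fun h _ =>
    hΓ.exists_width_eq_nat h

lemma isPrimitive_of_maxW_eq (hΓ : IsLatticePolygon Γ)
    (hP : (interiorLatticePoints Γ).Nonempty) {h : ℤ × ℤ} (hh : h ≠ 0)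
    (ht : maxW Γ h = maxW (adjoint Γ) h + 1) : IsPrimitive h := by
  set d : ℤ := (Int.gcd h.1 h.2 : ℤ)
  have hd : 0 < d := by
    have : Int.gcd h.1 h.2 ≠ 0 := fun h0 =>
      hh (Prod.ext (Int.gcd_eq_zero_iff.mp h0).1 (Int.gcd_eq_zero_iff.mp h0).2)
    omega
  set h₀ : ℤ × ℤ := (h.1 / d, h.2 / d)
  have hdh₀ : h = d • h₀ := Prod.ext (Int.mul_ediv_cancel' (Int.gcd_dvd_left h.1 h.2)).symm
    (Int.mul_ediv_cancel' (Int.gcd_dvd_right h.1 h.2)).symm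
  have hh₀ : h₀ ≠ 0 := by rintro h0; rw [h0, smul_zero] at hdh₀; exact hh hdh₀
  have hgap := hΓ.maxW_adjoint_add_one_le hP hh₀
  rw [hdh₀, maxW_smul _ hd.le, maxW_smul _ hd.le] at ht
  have : (d : ℝ) ≤ 1 := by nlinarith [(show (0 : ℝ) < d by exact_mod_cast hd)]
  have hd1 : d = 1 := by exact_mod_cast this.antisymm (by exact_mod_cast hd)
  exact Nat.cast_eq_one.mp hd1

end IsLatticePolygon

def cross (a b : ℤ × ℤ) : ℤ := a.1 * b.2 - a.2 * b.1

lemma cross_add_smul_left (a b : ℤ × ℤ) (k : ℤ) : cross (a + k • b) b = cross a b := by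
  simp only [cross, Prod.fst_add, Prod.snd_add, Prod.smul_fst, Prod.smul_snd, smul_eq_mul]
  ring

lemma ne_zero_of_cross_eq_one {a b : ℤ × ℤ} (hab : cross a b = 1) : a ≠ 0 := by
  rintro rfl; simp [cross] at hab

lemma IsPrimitive.exists_cross_eq_one {h : ℤ × ℤ} (hh : IsPrimitive h) :
    ∃ ξ : ℤ × ℤ, cross ξ h = 1 := by
  refine ⟨(Int.gcdB h.1 h.2, -Int.gcdA h.1 h.2), ?_⟩
  have := Int.gcd_eq_gcd_ab h.1 h.2
  rw [hh] at this
  simp only [cross]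
  linear_combination -this

lemma isLat_of_cross_eq_one {ξ h : ℤ × ℤ} (hξ : cross ξ h = 1) {z : ℝ × ℝ}
    (hzξ : ∃ k : ℤ, ev ξ z = k) (hzh : ∃ k : ℤ, ev h z = k) : IsLat z := by
  obtain ⟨a, ha⟩ := hzξ
  obtain ⟨b, hb⟩ := hzh
  have hξR : (ξ.1 : ℝ) * h.2 - ξ.2 * h.1 = 1 := by exact_mod_cast hξ
  simp only [ev] at ha hb
  constructor
  · exact ⟨a * h.2 - b * ξ.2, by push_cast; linear_combination h.2 * ha - ξ.2 * hb - z.1 * hξR⟩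
  · exact ⟨b * ξ.1 - a * h.1, by push_cast; linear_combination ξ.1 * hb - h.1 * ha - z.2 * hξR⟩

lemma Set.OrdConnected.exists_int_subset_Ioo {C : Set ℝ} (hC : C.OrdConnected)
    (hZ : ∀ k : ℤ, (k : ℝ) ∉ C) : ∃ n : ℤ, C ⊆ Ioo (n : ℝ) (n + 1) := by
  rcases C.eq_empty_or_nonempty with rfl | ⟨x₀, hx₀⟩
  · exact ⟨0, empty_subset _⟩
  refine ⟨⌊x₀⌋, fun x hx => ⟨?_, ?_⟩⟩
  · by_contra! hle
    exact hZ _ (hC.out hx hx₀ ⟨hle, Int.floor_le x₀⟩)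
  · by_contra! hge
    exact hZ (⌊x₀⌋ + 1) (hC.out hx₀ hx ⟨by push_cast; exact (Int.lt_floor_add_one x₀).le, by
      push_cast; exact hge⟩)

lemma exists_int_forall_ev_mem_Ioo {Γ : Set (ℝ × ℝ)} (hΓ : Convex ℝ Γ) {ξ h : ℤ × ℤ}
    (hξ : cross ξ h = 1) {L : ℤ} (hL : ∀ p ∈ interiorLatticePoints Γ, ev h p ≠ L) :
    ∃ n : ℤ, ∀ z ∈ interior Γ, ev h z = L → ev ξ z ∈ Ioo (n : ℝ) (n + 1) := by
  set C := ev ξ '' (interior Γ ∩ {z | ev h z = L})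
  have hC : C.OrdConnected :=
    ((hΓ.interior.inter (convex_hyperplane (isLinearMap_ev h) _)).is_linear_image
      (isLinearMap_ev ξ)).ordConnected
  have hZ : ∀ k : ℤ, (k : ℝ) ∉ C := by
    rintro k ⟨z, ⟨hz, hzL⟩, hzk⟩
    exact hL z ⟨hz, isLat_of_cross_eq_one hξ ⟨k, hzk⟩ ⟨L, hzL⟩⟩ hzL
  obtain ⟨n, hn⟩ := hC.exists_int_subset_Ioo hZ
  exact ⟨n, fun z hz hzL => hn ⟨z, ⟨hz, hzL⟩, rfl⟩⟩

lemma exists_mem_interior_ev_eq {Γ : Set (ℝ × ℝ)} (hΓ : Convex ℝ Γ) {p q : ℝ × ℝ}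
    (hp : p ∈ interior Γ) (hq : q ∈ Γ) {h : ℤ × ℤ} {L : ℝ} (hpL : ev h p ≤ L)
    (hLq : L < ev h q) (ξ : ℤ × ℤ) :
    ∃ w ∈ interior Γ, ev h w = L ∧
      (ev h q - ev h p) * ev ξ w = (ev h q - L) * ev ξ p + (L - ev h p) * ev ξ q := by
  have hpq : 0 < ev h q - ev h p := by linarith
  set t := (L - ev h p) / (ev h q - ev h p)
  have ht₀ : 0 ≤ t := div_nonneg (by linarith) hpq.le
  have ht₁ : t < 1 := (div_lt_one hpq).mpr (by linarith)
  refine ⟨(1 - t) • p + t • q,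
    hΓ.combo_interior_self_mem_interior hp hq (by linarith) ht₀ (by ring), ?_, ?_⟩
  · simp only [ev_add_right, ev_smul_right, t]
    field_simp
    ring
  · simp only [ev_add_right, ev_smul_right, t]
    field_simp
    ring

-- `h₁`, `h₂` say that projecting `(x, y)` from the apex `(s, M)` to level `m + 1` lands in
-- `(n, n + 1)`. In the coordinate `x + k y` with `k = (n - s) / (M - m - 1)`, the apex satisfies
-- `0 ≤ n - s < M - m - 1` and the wedge becomes `{1 ≤ x - n} ∩ {x + y ≤ n + m + 1}`.
lemma wedge_arith {m M n s x y : ℤ} (hy : y ≤ m) (hM : m + 2 ≤ M)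
    (h₁ : n * (M - y) < (M - m - 1) * x + (m + 1 - y) * s)
    (h₂ : (M - m - 1) * x + (m + 1 - y) * s < (n + 1) * (M - y)) :
    n + (n - s) / (M - m - 1) * (m + 1) + 1 ≤ x + (n - s) / (M - m - 1) * y ∧
      x + (n - s) / (M - m - 1) * y + y ≤ n + (n - s) / (M - m - 1) * (m + 1) + m + 1 := by
  set D := M - m - 1
  set k := (n - s) / D
  set ρ := (n - s) % D
  have hD : 0 < D := by omega
  have hdiv : D * k + ρ = n - s := Int.mul_ediv_add_emod _ _
  have hρ₀ : 0 ≤ ρ := Int.emod_nonneg _ hD.ne'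
  have hρD : ρ < D := Int.emod_lt_of_pos _ hD
  set v := x - n - k * (m + 1 - y)
  have hDv : D * v = D * (x - n) - (m + 1 - y) * (n - s) + (m + 1 - y) * ρ := by
    simp only [v]; linear_combination -(m + 1 - y) * hdiv
  have hv₁ : 0 < v := pos_of_mul_pos_right (by nlinarith) hD.le
  have hv₂ : v < m - y + 2 := by
    have : (m + 1 - y) * ρ ≤ (m + 1 - y) * (D - 1) :=
      mul_le_mul_of_nonneg_left (by omega) (by omega)
    exact lt_of_mul_lt_mul_left (by nlinarith) hD.le
  constructor <;> linarith

lemma exists_wedge {Γ : Set (ℝ × ℝ)} (hΓ : Convex ℝ Γ) {ξ h : ℤ × ℤ} (hξ : cross ξ h = 1)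
    {m : ℤ} (hm : ∀ p ∈ interiorLatticePoints Γ, ev h p ≤ m) {q : ℝ × ℝ} (hq : q ∈ Γ)
    (hqlat : IsLat q) (hqm : (m : ℝ) + 2 ≤ ev h q) :
    ∃ g : ℤ × ℤ, ∃ N : ℤ, cross g h = 1 ∧ ∀ p ∈ interiorLatticePoints Γ,
      (N : ℝ) + 1 ≤ ev g p ∧ ev g p + ev h p ≤ N + m + 1 := by
  obtain ⟨n, hn⟩ := exists_int_forall_ev_mem_Ioo hΓ hξ (L := m + 1) fun p hp hpL => by
    have := hm p hp; push_cast at hpL; linarith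
  obtain ⟨s, hs⟩ := hqlat.exists_ev_eq ξ
  obtain ⟨M, hM⟩ := hqlat.exists_ev_eq h
  set k := (n - s) / (M - m - 1)
  refine ⟨ξ + k • h, n + k * (m + 1), by rw [cross_add_smul_left, hξ], fun p hp => ?_⟩
  obtain ⟨x, hx⟩ := hp.2.exists_ev_eq ξ
  obtain ⟨y, hy⟩ := hp.2.exists_ev_eq h
  have hym : y ≤ m := by exact_mod_cast hy ▸ hm p hp
  have hMm : m + 2 ≤ M := by exact_mod_cast hM ▸ hqm
  obtain ⟨w, hw, hwh, hwξ⟩ := exists_mem_interior_ev_eq hΓ hp.1 hq (L := ((m + 1 : ℤ) : ℝ))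
    (by push_cast; linarith [hm p hp]) (by push_cast; linarith) ξ
  obtain ⟨hnw, hwn⟩ := hn w hw hwh
  rw [hx, hy, hs, hM] at hwξ
  have hMy : (0 : ℝ) < M - y := by exact_mod_cast (by omega : 0 < M - y)
  have h₁ : (n : ℝ) * (M - y) < (M - m - 1) * x + (m + 1 - y) * s := by
    push_cast at hwξ; nlinarith
  have h₂ : (M - m - 1) * x + (m + 1 - y) * s < ((n : ℝ) + 1) * (M - y) := by
    push_cast at hwξ; nlinarith
  obtain ⟨hlow, hhigh⟩ := wedge_arith hym hMm (by exact_mod_cast h₁) (by exact_mod_cast h₂)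
  simp only [ev_add_left, ev_smul_left, hx, hy]
  constructor
  · exact_mod_cast hlow
  · exact_mod_cast hhigh

lemma IsLatticePolygon.maxW_le_maxW_adjoint_add_one {Γ : Set (ℝ × ℝ)} (hΓ : IsLatticePolygon Γ)
    (hP : (interiorLatticePoints Γ).Nonempty)
    (hQ : (interiorLatticePoints (adjoint Γ)).Nonempty) {h : ℤ × ℤ} (hh : h ≠ 0)
    (ht : maxW (adjoint Γ) h = maxW (adjoint (adjoint Γ)) h + 1) :
    maxW Γ h ≤ maxW (adjoint Γ) h + 1 := by
  by_contra! hlt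
  have hΓ' := hΓ.isLatticePolygon_adjoint hP
  obtain ⟨ξ, hξ⟩ := (hΓ'.isPrimitive_of_maxW_eq hQ hh ht).exists_cross_eq_one
  obtain ⟨p₁, hp₁, hp₁max⟩ := hΓ.exists_isGreatest_adjoint hP h
  obtain ⟨p₂, hp₂, hp₂max⟩ := hΓ'.exists_isGreatest_adjoint hQ h
  obtain ⟨q, hqΓ, hq, hqmax⟩ := hΓ.exists_isGreatest h
  obtain ⟨m, hm⟩ := hp₁.2.exists_ev_eq h
  obtain ⟨M, hM⟩ := hq.exists_ev_eq h
  rw [maxW, hp₁max.csSup_eq, hm, maxW, hp₂max.csSup_eq] at ht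
  rw [maxW, hp₁max.csSup_eq, hm, maxW, hqmax.csSup_eq, hM] at hlt
  have hmP : ∀ p ∈ interiorLatticePoints Γ, ev h p ≤ m :=
    fun p hp => hm ▸ hp₁max.2 (mem_image_of_mem _ (subset_convexHull ℝ _ hp))
  have hqm : (m : ℝ) + 2 ≤ ev h q := by
    have : m + 1 < M := by exact_mod_cast hlt
    rw [hM]; exact_mod_cast (show m + 2 ≤ M by omega)
  obtain ⟨g, N, hg, hwedge⟩ := exists_wedge hΓ.convex hξ hmP hqΓ hq hqm
  -- `p₂` lies on level `m - 1`, where the wedge leaves room for just two lattice points,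
  -- both on its boundary lines.
  have hp₂P : p₂ ∈ interiorLatticePoints Γ :=
    ⟨hΓ.convex.adjoint_subset_interior (interior_subset hp₂.1), hp₂.2⟩
  obtain ⟨hlow, hhigh⟩ := hwedge p₂ hp₂P
  obtain ⟨x, hx⟩ := hp₂.2.exists_ev_eq g
  have hx' : x = N + 1 ∨ x = N + 2 := by
    rw [hx] at hlow hhigh
    have hx₁ : N + 1 ≤ x := by exact_mod_cast hlow
    have hx₂ : x ≤ N + 2 := by exact_mod_cast (by linarith : (x : ℝ) ≤ N + 2)
    omega
  rcases hx' with rfl | rfl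
  · refine not_mem_interior_convexHull_of_forall_ev_le (h := -g)
      (neg_ne_zero.mpr (ne_zero_of_cross_eq_one hg)) (fun p hp => ?_) hp₂.1
    simp only [ev_neg_left, hx]
    push_cast
    linarith [(hwedge p hp).1]
  · have hgh : cross (g + h) h = 1 := by simpa [hg] using cross_add_smul_left g h 1
    refine not_mem_interior_convexHull_of_forall_ev_le (h := g + h)
      (ne_zero_of_cross_eq_one hgh) (fun p hp => ?_) hp₂.1
    simp only [ev_add_left, hx]
    push_cast
    linarith [(hwedge p hp).2]

lemma IsLatticePolygon.tight_of_tight_adjoint {Γ : Set (ℝ × ℝ)} (hΓ : IsLatticePolygon Γ)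
    (hP : (interiorLatticePoints Γ).Nonempty)
    (hQ : (interiorLatticePoints (adjoint Γ)).Nonempty) {h : ℤ × ℤ} (hh : h ≠ 0)
    (ht : Tight (adjoint Γ) h) : Tight Γ h := by
  obtain ⟨htmax, htmin⟩ := ht
  rw [minW_eq_neg_maxW_neg, minW_eq_neg_maxW_neg] at htmin
  rw [Tight, minW_eq_neg_maxW_neg, minW_eq_neg_maxW_neg]
  have hle := hΓ.maxW_le_maxW_adjoint_add_one hP hQ hh htmax
  have hle' := hΓ.maxW_le_maxW_adjoint_add_one hP hQ (neg_ne_zero.mpr hh) (by linarith)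
  have hge := hΓ.maxW_adjoint_add_one_le hP hh
  have hge' := hΓ.maxW_adjoint_add_one_le hP (neg_ne_zero.mpr hh)
  constructor <;> linarith

lemma Tight.width_eq {Γ : Set (ℝ × ℝ)} {h : ℤ × ℤ} (ht : Tight Γ h) :
    width Γ h = width (adjoint Γ) h + 2 := by
  rw [width, width, ht.1, ht.2]
  ring

/-- if every optimal direction of the adjoint `Γ'` is tight for `Γ'`
(`S(Γ') = T(Γ')`, requiring `Γ''` nonempty), then `S(Γ) = S(Γ')` and
`v(Γ) = v(Γ') + 2`. -/
theorem stmt_9 (S : Set (ℝ × ℝ)) (hfin : S.Finite) (hne : S.Nonempty)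
    (hlat : ∀ p ∈ S, IsLat p)
    (Γ : Set (ℝ × ℝ)) (hΓ : Γ = convexHull ℝ S)
    (hint1 : {p | p ∈ interior Γ ∧ IsLat p}.Nonempty)
    (hint2 : {p | p ∈ interior (adjoint Γ) ∧ IsLat p}.Nonempty)
    (hST : ∀ h ∈ optimalSet (adjoint Γ), Tight (adjoint Γ) h) :
    optimalSet Γ = optimalSet (adjoint Γ) ∧
    latticeWidth Γ = latticeWidth (adjoint Γ) + 2 := by
  have hpoly : IsLatticePolygon Γ := ⟨S, hfin, hne, hlat, hΓ.symm⟩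
  have hle : ∀ g ≠ 0, width (adjoint Γ) g + 2 ≤ width Γ g :=
    fun g hg => hpoly.width_adjoint_add_two_le hint1 hg
  have heq : ∀ g ∈ optimalSet (adjoint Γ), width Γ g = width (adjoint Γ) g + 2 :=
    fun g hg => (hpoly.tight_of_tight_adjoint hint1 hint2 hg.1 (hST g hg)).width_eq
  obtain ⟨h₀, hh₀, hleast⟩ := (hpoly.isLatticePolygon_adjoint hint1).exists_isLeast_width
  have hv' : latticeWidth (adjoint Γ) = width (adjoint Γ) h₀ := hleast.csInf_eq
  have hv : latticeWidth Γ = latticeWidth (adjoint Γ) + 2 := by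
    have hw₀ : width Γ h₀ = latticeWidth (adjoint Γ) + 2 := by
      rw [heq h₀ ⟨hh₀, hv'.symm⟩, hv']
    rw [← hw₀]
    refine IsLeast.csInf_eq ⟨mem_image_of_mem _ hh₀, ?_⟩
    rintro _ ⟨g, hg, rfl⟩
    linarith [hle g hg, hleast.2 (mem_image_of_mem _ hg)]
  refine ⟨Set.ext fun g => ⟨fun ⟨hg, hgw⟩ => ⟨hg, ?_⟩, fun hg => ⟨hg.1, ?_⟩⟩, hv⟩
  · linarith [hle g hg, hleast.2 (mem_image_of_mem _ hg)]
  · rw [heq g hg, hg.2, hv]
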